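/- (Theorem 2, quantitative version.) Let Y and X_0, X_1, …, X_n be jointly distributed random variables, with each X_k taking values in a common finite set 𝒳, and suppose |L(y,a)| ≤ M for all y and a and I_{χ²}(Y; X_{k+1} | X_k) ≤ ε² for every k < n. Let Θ₁ and Θ₂ be random variables taking values in {0,1,…,n}, each independent of (Y, X_0, …, X_n), with Θ₁ ≤_st Θ₂. Then H_L(Y | X_{Θ₁}, Θ₁) ≤ H_L(Y | X_{Θ₂}, Θ₂) + 2Mε·|𝒳|·E[Θ₂]. -/

import Mathlib

/-
Under independence of `Θ` from `(Y, X_0, …, X_n)`, `H_L(Y | X_Θ, Θ)` is the average of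
`h(θ) = H_L(Y | X_θ)` over the law of `Θ`. The `L`-entropy is concave and `M`-Lipschitz for
the `ℓ¹` distance, so `H_L(Y | X_k) ≤ H_L(Y | X_k, X_{k+1}) + M E‖P_{Y|X_k,X_{k+1}} - P_{Y|X_k}‖₁
≤ H_L(Y | X_{k+1}) + M √(I_{χ²}(Y; X_{k+1} | X_k))`, the last step by Cauchy–Schwarz.
Hence `θ ↦ h(θ) + M ε θ` is nondecreasing on `{0, …, n}`, and by Abel summation expectations
of nondecreasing functions respect `≤_st`. This gives `E h(Θ₁) ≤ E h(Θ₂) + M ε E[Θ₂]`, which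
is stronger than the claim since `2 |𝒳| ≥ 1`.
-/

open Finset

open Classical in
/-- Probability of an event under a pmf `p` on a finite sample space. -/
noncomputable def pr {Ω : Type*} [Fintype Ω] (p : Ω → ℝ) (E : Ω → Prop) : ℝ :=
  ∑ ω, if E ω then p ω else 0

/-- Conditional distribution of a random variable `Y` given an event `E`. -/
noncomputable def condDist {Ω 𝒴 : Type*} [Fintype Ω] (p : Ω → ℝ) (Y : Ω → 𝒴)
    (E : Ω → Prop) : 𝒴 → ℝ :=
  fun y => pr p (fun ω => Y ω = y ∧ E ω) / pr p E

/-- Neyman's χ²-divergence `D_{χ²}(P‖Q)`.  (In Lean, `x / 0 = 0`, which realizes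
the convention `0²/0 = 0` under absolute continuity.) -/
noncomputable def chiSqDiv {𝒴 : Type*} [Fintype 𝒴] (P Q : 𝒴 → ℝ) : ℝ :=
  ∑ y, (P y - Q y) ^ 2 / Q y

/-- χ²-conditional mutual information `I_{χ²}(Y;Z|X)`. -/
noncomputable def chiSqCMI {Ω 𝒳 𝒴 𝒵 : Type*} [Fintype Ω] [Fintype 𝒳] [Fintype 𝒴]
    [Fintype 𝒵] (p : Ω → ℝ) (Y : Ω → 𝒴) (Z : Ω → 𝒵) (X : Ω → 𝒳) : ℝ :=
  ∑ x, ∑ z, pr p (fun ω => X ω = x ∧ Z ω = z) *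
    chiSqDiv (condDist p Y (fun ω => X ω = x ∧ Z ω = z))
      (condDist p Y (fun ω => X ω = x))

/-- Expected loss `E_{Y∼P}[L(Y,a)]`. -/
noncomputable def expLoss {𝒴 𝒜 : Type*} [Fintype 𝒴] (L : 𝒴 → 𝒜 → ℝ) (P : 𝒴 → ℝ)
    (a : 𝒜) : ℝ :=
  ∑ y, P y * L y a

/-- The `L`-entropy `H_L(P) = min_{a∈𝒜} E_{Y∼P}[L(Y,a)]`. -/
noncomputable def Lentropy {𝒴 𝒜 : Type*} [Fintype 𝒴] (L : 𝒴 → 𝒜 → ℝ) (P : 𝒴 → ℝ) : ℝ :=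
  ⨅ a : 𝒜, expLoss L P a

/-- The `L`-conditional entropy `H_L(Y|X) = Σ_x P_X(x) H_L(P_{Y|X=x})`. -/
noncomputable def LcondEntropy {Ω 𝒳 𝒴 𝒜 : Type*} [Fintype Ω] [Fintype 𝒳] [Fintype 𝒴]
    (L : 𝒴 → 𝒜 → ℝ) (p : Ω → ℝ) (Y : Ω → 𝒴) (X : Ω → 𝒳) : ℝ :=
  ∑ x, pr p (fun ω => X ω = x) * Lentropy L (condDist p Y (fun ω => X ω = x))

/-- The freshness-aware conditional entropy `H_L(Y | X_Θ, Θ)` for an AoI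
random variable `Θ` taking values in `{0,…,n}`. -/
noncomputable def LcondEntropyAoI {Ω 𝒳 𝒴 𝒜 : Type*} [Fintype Ω] [Fintype 𝒳] [Fintype 𝒴]
    (L : 𝒴 → 𝒜 → ℝ) (p : Ω → ℝ) (Y : Ω → 𝒴) (X : ℕ → Ω → 𝒳) (Θ : Ω → ℕ) (n : ℕ) : ℝ :=
  ∑ θ ∈ Finset.range (n + 1), ∑ x,
    pr p (fun ω => Θ ω = θ ∧ X θ ω = x) *
      Lentropy L (condDist p Y (fun ω => X θ ω = x ∧ Θ ω = θ))

section Pr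

variable {Ω : Type*} [Fintype Ω] {p : Ω → ℝ}

lemma pr_nonneg (hp : ∀ ω, 0 ≤ p ω) (E : Ω → Prop) : 0 ≤ pr p E := by
  classical
  exact sum_nonneg fun ω _ => by split <;> simp [hp ω]

lemma pr_congr {E F : Ω → Prop} (h : ∀ ω, E ω ↔ F ω) : pr p E = pr p F := by
  obtain rfl : E = F := funext fun ω => propext (h ω)
  rfl

lemma pr_mono (hp : ∀ ω, 0 ≤ p ω) {E F : Ω → Prop} (h : ∀ ω, E ω → F ω) :
    pr p E ≤ pr p F := by
  classical
  refine sum_le_sum fun ω _ => ?_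
  by_cases hE : E ω
  · simp [hE, h ω hE]
  · simp only [if_neg hE]
    split_ifs <;> simp [hp ω]

lemma pr_eq_zero_of_imp (hp : ∀ ω, 0 ≤ p ω) {E F : Ω → Prop} (h : ∀ ω, E ω → F ω)
    (hF : pr p F = 0) : pr p E = 0 :=
  le_antisymm (hF ▸ pr_mono hp h) (pr_nonneg hp E)

lemma pr_true (hsum : ∑ ω, p ω = 1) : pr p (fun _ => True) = 1 := by
  simp [pr, hsum]

lemma pr_eq_sum_pr_and_eq {α : Type*} [Fintype α] (E : Ω → Prop) (f : Ω → α) :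
    pr p E = ∑ x, pr p (fun ω => E ω ∧ f ω = x) := by
  classical
  unfold pr
  rw [sum_comm]
  refine sum_congr rfl fun ω _ => ?_
  by_cases hE : E ω <;> simp [hE]

lemma pr_and_comp_eq_sum {β : Type*} [Fintype β] (E : Ω → Prop) (V : Ω → β) (S : β → Prop)
    [DecidablePred S] :
    pr p (fun ω => E ω ∧ S (V ω))
      = ∑ v, if S v then pr p (fun ω => E ω ∧ V ω = v) else 0 := by
  rw [pr_eq_sum_pr_and_eq _ V]
  refine sum_congr rfl fun v _ => ?_
  split_ifs with hv
  · exact pr_congr fun ω => ⟨fun h => ⟨h.1.1, h.2⟩, fun h => ⟨⟨h.1, h.2 ▸ hv⟩, h.2⟩⟩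
  · simp only [pr]
    exact sum_eq_zero fun ω _ => if_neg fun (h : (E ω ∧ S (V ω)) ∧ V ω = v) => hv (h.2 ▸ h.1.2)

lemma pr_and_comp_eq_mul_of_indep {β : Type*} [Fintype β] {E : Ω → Prop} {V : Ω → β}
    (hind : ∀ v, pr p (fun ω => E ω ∧ V ω = v) = pr p E * pr p (fun ω => V ω = v))
    (S : β → Prop) :
    pr p (fun ω => E ω ∧ S (V ω)) = pr p E * pr p (fun ω => S (V ω)) := by
  classical
  have hS := pr_and_comp_eq_sum (p := p) (fun _ => True) V S
  simp only [true_and] at hS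
  simp only [pr_and_comp_eq_sum E V S, hind, hS, mul_sum, mul_ite, mul_zero]

lemma sum_range_pr_eq_mul_eq_sum_mul {n : ℕ} {Θ : Ω → ℕ} (hΘ : ∀ ω, Θ ω ≤ n) (g : ℕ → ℝ) :
    ∑ θ ∈ range (n + 1), pr p (fun ω => Θ ω = θ) * g θ = ∑ ω, p ω * g (Θ ω) := by
  classical
  simp only [pr, sum_mul]
  rw [sum_comm]
  refine sum_congr rfl fun ω _ => ?_
  simp [ite_mul, Nat.lt_succ_of_le (hΘ ω)]

end Pr

section StochasticOrder

variable {Ω : Type*} [Fintype Ω] {p : Ω → ℝ}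

lemma eq_add_sum_range_ite_lt (f : ℕ → ℝ) {n θ : ℕ} (hθ : θ ≤ n) :
    f θ = f 0 + ∑ k ∈ range n, if k < θ then f (k + 1) - f k else 0 := by
  rw [← sum_filter, show (range n).filter (· < θ) = range θ by ext; simp; omega,
    sum_range_sub]
  ring

lemma sum_mul_comp_eq_add_sum_tail (hsum : ∑ ω, p ω = 1) (f : ℕ → ℝ) {n : ℕ} {Θ : Ω → ℕ}
    (hΘ : ∀ ω, Θ ω ≤ n) :
    ∑ ω, p ω * f (Θ ω)
      = f 0 + ∑ k ∈ range n, (f (k + 1) - f k) * pr p (fun ω => k < Θ ω) := by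
  classical
  calc ∑ ω, p ω * f (Θ ω)
      = ∑ ω, p ω * (f 0 + ∑ k ∈ range n, if k < Θ ω then f (k + 1) - f k else 0) :=
        sum_congr rfl fun ω _ => by rw [← eq_add_sum_range_ite_lt f (hΘ ω)]
    _ = _ := by
      simp_rw [pr, mul_add, sum_add_distrib, ← sum_mul, hsum, one_mul, mul_sum]
      rw [sum_comm]
      refine congrArg _ (sum_congr rfl fun k _ => sum_congr rfl fun ω _ => ?_)
      split_ifs <;> ring

lemma sum_mul_comp_le_of_tail_le (hsum : ∑ ω, p ω = 1) {f : ℕ → ℝ} {n : ℕ}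
    (hf : ∀ k < n, f k ≤ f (k + 1)) {Θ₁ Θ₂ : Ω → ℕ} (hΘ₁ : ∀ ω, Θ₁ ω ≤ n)
    (hΘ₂ : ∀ ω, Θ₂ ω ≤ n)
    (hst : ∀ k : ℕ, pr p (fun ω => k < Θ₁ ω) ≤ pr p (fun ω => k < Θ₂ ω)) :
    ∑ ω, p ω * f (Θ₁ ω) ≤ ∑ ω, p ω * f (Θ₂ ω) := by
  rw [sum_mul_comp_eq_add_sum_tail hsum f hΘ₁, sum_mul_comp_eq_add_sum_tail hsum f hΘ₂]
  gcongr with k hk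
  exacts [sub_nonneg.2 (hf k (mem_range.1 hk)), hst k]

end StochasticOrder

noncomputable def jointDist {Ω 𝒴 : Type*} [Fintype Ω] (p : Ω → ℝ) (Y : Ω → 𝒴)
    (E : Ω → Prop) : 𝒴 → ℝ :=
  fun y => pr p (fun ω => Y ω = y ∧ E ω)

section Lentropy

variable {𝒴 𝒜 : Type*} [Fintype 𝒴] (L : 𝒴 → 𝒜 → ℝ)

lemma Lentropy_le_expLoss [Finite 𝒜] (P : 𝒴 → ℝ) (a : 𝒜) : Lentropy L P ≤ expLoss L P a :=
  ciInf_le (Set.finite_range _).bddBelow a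

lemma exists_Lentropy_eq_expLoss [Finite 𝒜] [Nonempty 𝒜] (P : 𝒴 → ℝ) :
    ∃ a, Lentropy L P = expLoss L P a := by
  obtain ⟨a, ha⟩ := Finite.exists_min (expLoss L P)
  exact ⟨a, le_antisymm (Lentropy_le_expLoss L P a) (le_ciInf ha)⟩

lemma Lentropy_const_mul {c : ℝ} (hc : 0 ≤ c) (P : 𝒴 → ℝ) :
    Lentropy L (fun y => c * P y) = c * Lentropy L P := by
  simp only [Lentropy, expLoss, Real.mul_iInf_of_nonneg hc, mul_sum, mul_assoc]

lemma sum_Lentropy_le_Lentropy_sum [Finite 𝒜] [Nonempty 𝒜] {ι : Type*} (s : Finset ι)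
    (P : ι → 𝒴 → ℝ) :
    ∑ i ∈ s, Lentropy L (P i) ≤ Lentropy L (fun y => ∑ i ∈ s, P i y) := by
  refine le_ciInf fun a => ?_
  rw [expLoss, show ∑ y, (∑ i ∈ s, P i y) * L y a = ∑ i ∈ s, expLoss L (P i) a by
    simp only [expLoss, sum_mul]; exact sum_comm]
  exact sum_le_sum fun i _ => Lentropy_le_expLoss L (P i) a

lemma Lentropy_le_add_mul_sum_abs_sub [Finite 𝒜] [Nonempty 𝒜] {M : ℝ} (hL : ∀ y a, |L y a| ≤ M)
    (P Q : 𝒴 → ℝ) :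
    Lentropy L Q ≤ Lentropy L P + M * ∑ y, |P y - Q y| := by
  obtain ⟨a, ha⟩ := exists_Lentropy_eq_expLoss L P
  have hdiff : expLoss L Q a - expLoss L P a ≤ M * ∑ y, |P y - Q y| := by
    rw [expLoss, expLoss, ← sum_sub_distrib, mul_sum]
    refine sum_le_sum fun y _ => ?_
    calc Q y * L y a - P y * L y a = -((P y - Q y) * L y a) := by ring
      _ ≤ |P y - Q y| * |L y a| := (neg_le_abs _).trans_eq (abs_mul _ _)
      _ ≤ M * |P y - Q y| := by rw [mul_comm]; gcongr; exact hL y a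
  linarith [Lentropy_le_expLoss L Q a]

lemma pr_mul_Lentropy_condDist {Ω : Type*} [Fintype Ω] {p : Ω → ℝ} (hp : ∀ ω, 0 ≤ p ω)
    (Y : Ω → 𝒴) (E : Ω → Prop) :
    pr p E * Lentropy L (condDist p Y E) = Lentropy L (jointDist p Y E) := by
  rw [← Lentropy_const_mul L (pr_nonneg hp E)]
  congr 1
  ext y
  by_cases hE : pr p E = 0
  · simp [jointDist, hE, pr_eq_zero_of_imp hp (fun ω (h : Y ω = y ∧ E ω) => h.2) hE]
  · exact mul_div_cancel₀ _ hE

end Lentropy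

section ChiSq

variable {Ω 𝒴 : Type*} [Fintype Ω] {p : Ω → ℝ}

lemma condDist_nonneg (hp : ∀ ω, 0 ≤ p ω) (Y : Ω → 𝒴) (E : Ω → Prop) (y : 𝒴) :
    0 ≤ condDist p Y E y :=
  div_nonneg (pr_nonneg hp _) (pr_nonneg hp _)

lemma sum_condDist [Fintype 𝒴] (Y : Ω → 𝒴) {E : Ω → Prop} (hE : pr p E ≠ 0) :
    ∑ y, condDist p Y E y = 1 := by
  unfold condDist
  rw [← sum_div, div_eq_one_iff_eq hE, pr_eq_sum_pr_and_eq E Y]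
  exact sum_congr rfl fun y _ => pr_congr fun ω => and_comm

lemma condDist_eq_zero_of_imp (hp : ∀ ω, 0 ≤ p ω) (Y : Ω → 𝒴) {E F : Ω → Prop}
    (hEF : ∀ ω, E ω → F ω) (hF : pr p F ≠ 0) {y : 𝒴} (hy : condDist p Y F y = 0) :
    condDist p Y E y = 0 := by
  rw [condDist, div_eq_zero_iff, or_iff_left hF] at hy
  rw [condDist, pr_eq_zero_of_imp hp (fun ω (h : Y ω = y ∧ E ω) => ⟨h.1, hEF ω h.2⟩) hy,
    zero_div]

lemma sq_sum_abs_sub_le_chiSqDiv [Fintype 𝒴] {P Q : 𝒴 → ℝ} (hQ : ∀ y, 0 ≤ Q y) (hQ1 : ∑ y, Q y = 1)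
    (hPQ : ∀ y, Q y = 0 → P y = 0) :
    (∑ y, |P y - Q y|) ^ 2 ≤ chiSqDiv P Q := by
  have hCS := sum_sq_le_sum_mul_sum_of_sq_le_mul univ (r := fun y => |P y - Q y|)
    (fun y _ => hQ y) (fun y _ => div_nonneg (sq_nonneg (P y - Q y)) (hQ y)) fun y _ => by
      by_cases hy : Q y = 0
      · simp [hy, hPQ y hy]
      · rw [sq_abs, mul_div_cancel₀ _ hy]
  rwa [hQ1, one_mul] at hCS

lemma sum_mul_le_sqrt_sum_mul_sq {ι : Type*} [Fintype ι] {w : ι → ℝ} (hw : ∀ i, 0 ≤ w i)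
    (hw1 : ∑ i, w i = 1) (t : ι → ℝ) :
    ∑ i, w i * t i ≤ √(∑ i, w i * t i ^ 2) := by
  have hCS := sum_sq_le_sum_mul_sum_of_sq_le_mul univ (r := fun i => w i * t i)
    (fun i _ => hw i) (fun i _ => mul_nonneg (hw i) (sq_nonneg (t i))) fun i _ => le_of_eq (by ring)
  rw [hw1, one_mul] at hCS
  exact (le_abs_self _).trans (Real.abs_le_sqrt hCS)

end ChiSq

section CondEntropy

variable {Ω 𝒳 𝒵 𝒴 𝒜 : Type*} [Fintype Ω] [Fintype 𝒳] [Fintype 𝒵] [Fintype 𝒴]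
  (L : 𝒴 → 𝒜 → ℝ) {p : Ω → ℝ} (Y : Ω → 𝒴) (W : Ω → 𝒳) (Z : Ω → 𝒵)

lemma LcondEntropy_eq_sum_sum :
    LcondEntropy L p Y W
      = ∑ x, ∑ z, pr p (fun ω => W ω = x ∧ Z ω = z) *
          Lentropy L (condDist p Y (fun ω => W ω = x)) := by
  unfold LcondEntropy
  exact sum_congr rfl fun x _ => by rw [pr_eq_sum_pr_and_eq _ Z, sum_mul]

/-- The left side is `H_L(Y | W, Z)`: conditioning reduces `L`-entropy. -/
lemma sum_sum_pr_mul_Lentropy_le_LcondEntropy [Finite 𝒜] [Nonempty 𝒜] (hp : ∀ ω, 0 ≤ p ω) :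
    ∑ x, ∑ z, pr p (fun ω => W ω = x ∧ Z ω = z) *
        Lentropy L (condDist p Y (fun ω => W ω = x ∧ Z ω = z))
      ≤ LcondEntropy L p Y Z := by
  simp_rw [LcondEntropy, pr_mul_Lentropy_condDist L hp]
  rw [sum_comm]
  refine sum_le_sum fun z _ => ?_
  have hsplit : jointDist p Y (fun ω => Z ω = z)
      = fun y => ∑ x, jointDist p Y (fun ω => W ω = x ∧ Z ω = z) y := by
    ext y
    rw [jointDist, pr_eq_sum_pr_and_eq _ W]
    exact sum_congr rfl fun x _ => pr_congr fun ω => by tauto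
  rw [hsplit]
  exact sum_Lentropy_le_Lentropy_sum L univ _

lemma sum_sum_pr_mul_sum_abs_sub_le_sqrt_chiSqCMI (hp : ∀ ω, 0 ≤ p ω)
    (hsum : ∑ ω, p ω = 1) :
    ∑ x, ∑ z, pr p (fun ω => W ω = x ∧ Z ω = z) *
        ∑ y, |condDist p Y (fun ω => W ω = x ∧ Z ω = z) y
          - condDist p Y (fun ω => W ω = x) y|
      ≤ √(chiSqCMI p Y Z W) := by
  set w : 𝒳 → 𝒵 → ℝ := fun x z => pr p (fun ω => W ω = x ∧ Z ω = z)
  have hw1 : ∑ q : 𝒳 × 𝒵, w q.1 q.2 = 1 := by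
    rw [Fintype.sum_prod_type, ← pr_true hsum, pr_eq_sum_pr_and_eq _ W]
    refine sum_congr rfl fun x _ => ?_
    rw [pr_eq_sum_pr_and_eq _ Z]
    exact sum_congr rfl fun z _ => pr_congr fun ω => by simp
  have hterm : ∀ x z, w x z * (∑ y, |condDist p Y (fun ω => W ω = x ∧ Z ω = z) y
        - condDist p Y (fun ω => W ω = x) y|) ^ 2
      ≤ w x z * chiSqDiv (condDist p Y (fun ω => W ω = x ∧ Z ω = z))
          (condDist p Y (fun ω => W ω = x)) := by
    intro x z
    by_cases hxz : w x z = 0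
    · simp [hxz]
    have hx : pr p (fun ω => W ω = x) ≠ 0 := fun h =>
      hxz (pr_eq_zero_of_imp hp (fun ω (h : W ω = x ∧ Z ω = z) => h.1) h)
    exact mul_le_mul_of_nonneg_left (sq_sum_abs_sub_le_chiSqDiv (condDist_nonneg hp Y _)
      (sum_condDist Y hx) fun y => condDist_eq_zero_of_imp hp Y (fun ω h => h.1) hx)
      (pr_nonneg hp _)
  have hCS := sum_mul_le_sqrt_sum_mul_sq (fun q : 𝒳 × 𝒵 => pr_nonneg hp _) hw1
    (fun q => ∑ y, |condDist p Y (fun ω => W ω = q.1 ∧ Z ω = q.2) y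
      - condDist p Y (fun ω => W ω = q.1) y|)
  simp only [Fintype.sum_prod_type] at hCS
  exact hCS.trans (Real.sqrt_le_sqrt (sum_le_sum fun x _ => sum_le_sum fun z _ => hterm x z))

lemma LcondEntropy_le_add_mul_sqrt_chiSqCMI [Finite 𝒜] [Nonempty 𝒜] {M : ℝ}
    (hL : ∀ y a, |L y a| ≤ M) (hM : 0 ≤ M) (hp : ∀ ω, 0 ≤ p ω) (hsum : ∑ ω, p ω = 1) :
    LcondEntropy L p Y W ≤ LcondEntropy L p Y Z + M * √(chiSqCMI p Y Z W) := by
  have hlip : ∀ x z, pr p (fun ω => W ω = x ∧ Z ω = z) *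
        Lentropy L (condDist p Y (fun ω => W ω = x))
      ≤ pr p (fun ω => W ω = x ∧ Z ω = z) *
          Lentropy L (condDist p Y (fun ω => W ω = x ∧ Z ω = z))
        + M * (pr p (fun ω => W ω = x ∧ Z ω = z) *
          ∑ y, |condDist p Y (fun ω => W ω = x ∧ Z ω = z) y
            - condDist p Y (fun ω => W ω = x) y|) := fun x z => by
    rw [mul_left_comm, ← mul_add]
    exact mul_le_mul_of_nonneg_left (Lentropy_le_add_mul_sum_abs_sub L hL _ _) (pr_nonneg hp _)
  calc LcondEntropy L p Y W
      ≤ ∑ x, ∑ z, (pr p (fun ω => W ω = x ∧ Z ω = z) *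
          Lentropy L (condDist p Y (fun ω => W ω = x ∧ Z ω = z))
        + M * (pr p (fun ω => W ω = x ∧ Z ω = z) *
          ∑ y, |condDist p Y (fun ω => W ω = x ∧ Z ω = z) y
            - condDist p Y (fun ω => W ω = x) y|)) := by
        rw [LcondEntropy_eq_sum_sum L Y W Z]
        exact sum_le_sum fun x _ => sum_le_sum fun z _ => hlip x z
    _ ≤ LcondEntropy L p Y Z + M * √(chiSqCMI p Y Z W) := by
        simp only [sum_add_distrib, ← mul_sum]
        gcongr
        · exact sum_sum_pr_mul_Lentropy_le_LcondEntropy L Y W Z hp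
        · exact sum_sum_pr_mul_sum_abs_sub_le_sqrt_chiSqCMI Y W Z hp hsum

end CondEntropy

lemma LcondEntropyAoI_eq_sum_mul_LcondEntropy {Ω 𝒳 𝒴 𝒜 : Type*} [Fintype Ω] [Fintype 𝒳]
    [Fintype 𝒴] (L : 𝒴 → 𝒜 → ℝ) {p : Ω → ℝ} (hp : ∀ ω, 0 ≤ p ω) (Y : Ω → 𝒴)
    (X : ℕ → Ω → 𝒳) {n : ℕ} {Θ : Ω → ℕ} (hΘ : ∀ ω, Θ ω ≤ n)
    (hind : ∀ (θ : ℕ) (v : 𝒴 × (Fin (n + 1) → 𝒳)),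
      pr p (fun ω => Θ ω = θ ∧ (Y ω, fun i => X i.1 ω) = v)
        = pr p (fun ω => Θ ω = θ)
            * pr p (fun ω => ((Y ω, fun i => X i.1 ω) : 𝒴 × (Fin (n + 1) → 𝒳)) = v)) :
    LcondEntropyAoI L p Y X Θ n = ∑ ω, p ω * LcondEntropy L p Y (X (Θ ω)) := by
  rw [← sum_range_pr_eq_mul_eq_sum_mul hΘ (fun θ => LcondEntropy L p Y (X θ))]
  refine sum_congr rfl fun θ hθ => ?_
  rw [LcondEntropy, mul_sum]
  refine sum_congr rfl fun x _ => ?_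
  have hjoint : jointDist p Y (fun ω => X θ ω = x ∧ Θ ω = θ)
      = fun y => pr p (fun ω => Θ ω = θ) * jointDist p Y (fun ω => X θ ω = x) y := by
    ext y
    have h := pr_and_comp_eq_mul_of_indep (E := fun ω => Θ ω = θ)
      (V := fun ω => ((Y ω, fun i => X i.1 ω) : 𝒴 × (Fin (n + 1) → 𝒳))) (hind θ)
      (fun v => v.1 = y ∧ v.2 ⟨θ, mem_range.1 hθ⟩ = x)
    rw [jointDist, jointDist, ← h]
    exact pr_congr fun ω => by tauto
  calc pr p (fun ω => Θ ω = θ ∧ X θ ω = x)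
        * Lentropy L (condDist p Y (fun ω => X θ ω = x ∧ Θ ω = θ))
      = Lentropy L (jointDist p Y (fun ω => X θ ω = x ∧ Θ ω = θ)) := by
        rw [pr_congr fun ω => and_comm, pr_mul_Lentropy_condDist L hp]
    _ = pr p (fun ω => Θ ω = θ) *
          (pr p (fun ω => X θ ω = x) * Lentropy L (condDist p Y (fun ω => X θ ω = x))) := by
        rw [hjoint, Lentropy_const_mul L (pr_nonneg hp _), pr_mul_Lentropy_condDist L hp]

/-- Theorem 2, quantitative version.  Under the ε-Markov
condition, if `Θ₁ ≤_st Θ₂` and both are independent of `(Y, X_0, …, X_n)`, then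
`H_L(Y|X_{Θ₁},Θ₁) ≤ H_L(Y|X_{Θ₂},Θ₂) + 2Mε|𝒳| E[Θ₂]`. -/
theorem freshness_aware_condEntropy_stochastic_order {Ω 𝒳 𝒴 𝒜 : Type*} [Fintype Ω]
    [Fintype 𝒳] [Fintype 𝒴] [Fintype 𝒜] [Nonempty 𝒜]
    (L : 𝒴 → 𝒜 → ℝ) (M : ℝ) (hL : ∀ y a, |L y a| ≤ M)
    (p : Ω → ℝ) (hp : ∀ ω, 0 ≤ p ω) (hsum : ∑ ω, p ω = 1)
    (Y : Ω → 𝒴) (X : ℕ → Ω → 𝒳) (n : ℕ)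
    (ε : ℝ) (hε : 0 ≤ ε)
    (hMarkov : ∀ k < n, chiSqCMI p Y (X (k + 1)) (X k) ≤ ε ^ 2)
    (Θ₁ Θ₂ : Ω → ℕ) (hΘ₁ : ∀ ω, Θ₁ ω ≤ n) (hΘ₂ : ∀ ω, Θ₂ ω ≤ n)
    (hind₁ : ∀ (θ : ℕ) (v : 𝒴 × (Fin (n + 1) → 𝒳)),
      pr p (fun ω => Θ₁ ω = θ ∧ (Y ω, fun i => X i.1 ω) = v)
        = pr p (fun ω => Θ₁ ω = θ)
            * pr p (fun ω => ((Y ω, fun i => X i.1 ω) : 𝒴 × (Fin (n + 1) → 𝒳)) = v))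
    (hind₂ : ∀ (θ : ℕ) (v : 𝒴 × (Fin (n + 1) → 𝒳)),
      pr p (fun ω => Θ₂ ω = θ ∧ (Y ω, fun i => X i.1 ω) = v)
        = pr p (fun ω => Θ₂ ω = θ)
            * pr p (fun ω => ((Y ω, fun i => X i.1 ω) : 𝒴 × (Fin (n + 1) → 𝒳)) = v))
    (hst : ∀ k : ℕ, pr p (fun ω => k < Θ₁ ω) ≤ pr p (fun ω => k < Θ₂ ω)) :
    LcondEntropyAoI L p Y X Θ₁ n
      ≤ LcondEntropyAoI L p Y X Θ₂ n
        + 2 * M * ε * (Fintype.card 𝒳 : ℝ) * (∑ ω, p ω * (Θ₂ ω : ℝ)) := by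
  obtain ⟨ω₀⟩ : Nonempty Ω := by
    by_contra h
    simp [not_nonempty_iff.1 h] at hsum
  have hM : 0 ≤ M := (abs_nonneg _).trans (hL (Y ω₀) (Classical.arbitrary 𝒜))
  have hcard : (1 : ℝ) ≤ Fintype.card 𝒳 := by
    have : Nonempty 𝒳 := ⟨X 0 ω₀⟩
    exact_mod_cast Fintype.card_pos
  set h : ℕ → ℝ := fun θ => LcondEntropy L p Y (X θ)
  have hstep : ∀ k < n, h k + M * ε * k ≤ h (k + 1) + M * ε * (k + 1 : ℕ) := fun k hk => by
    have hchain := LcondEntropy_le_add_mul_sqrt_chiSqCMI L Y (X k) (X (k + 1)) hL hM hp hsum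
    have hsqrt := mul_le_mul_of_nonneg_left (Real.sqrt_le_iff.2 ⟨hε, hMarkov k hk⟩) hM
    push_cast
    linarith
  have hmono := sum_mul_comp_le_of_tail_le hsum hstep hΘ₁ hΘ₂ hst
  simp only [mul_add, sum_add_distrib, mul_left_comm (p _) (M * ε), ← mul_sum] at hmono
  have hE : ∀ Θ : Ω → ℕ, 0 ≤ ∑ ω, p ω * (Θ ω : ℝ) := fun Θ =>
    sum_nonneg fun ω _ => mul_nonneg (hp ω) (Nat.cast_nonneg _)
  have hMε : 0 ≤ M * ε := mul_nonneg hM hε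
  rw [LcondEntropyAoI_eq_sum_mul_LcondEntropy L hp Y X hΘ₁ hind₁,
    LcondEntropyAoI_eq_sum_mul_LcondEntropy L hp Y X hΘ₂ hind₂]
  calc ∑ ω, p ω * h (Θ₁ ω)
      ≤ ∑ ω, p ω * h (Θ₁ ω) + M * ε * ∑ ω, p ω * (Θ₁ ω : ℝ) :=
        le_add_of_nonneg_right (mul_nonneg hMε (hE Θ₁))
    _ ≤ ∑ ω, p ω * h (Θ₂ ω) + M * ε * ∑ ω, p ω * (Θ₂ ω : ℝ) := hmono
    _ ≤ ∑ ω, p ω * h (Θ₂ ω) + 2 * M * ε * Fintype.card 𝒳 * ∑ ω, p ω * (Θ₂ ω : ℝ) := by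
        gcongr _ + ?_ * _
        · exact hE Θ₂
        · nlinarith
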